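/- arXiv:1601.00029 — 10 statements merged into one kernel-verified Lean document; each statement's English description precedes it below -/
import Mathlib

section
/- Let m ≥ 1, let I be a finite type, and let A : Fin m → ((Fin m → I) → ℂ) be an m-tuple of order-m cubic hypermatrices over I. Then the transpose of their BM product equals the BM product of the cyclically shifted tuple of transposes: (Prod(A))^⊤ = Prod(fun t => (A (t+1))^⊤); in the paper's notation, Prod(A^(1), A^(2), …, A^(m))^⊤ = Prod((A^(2))^⊤, …, (A^(m))^⊤, (A^(1))^⊤). This generalizes the matrix identity (A·B)^⊤ = B^⊤·A^⊤. -/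
/-- The BM product of an `m`-tuple of order-`m` cubic hypermatrices over index type `I`. -/
noncomputable def bmProd {m : ℕ} [NeZero m] {I : Type*} [Fintype I] [DecidableEq I]
    (A : Fin m → ((Fin m → I) → ℂ)) : (Fin m → I) → ℂ :=
  fun i => ∑ j : I, ∏ t : Fin m, A t (Function.update i (t + 1) j)

/-- The hypermatrix transpose: a cyclic permutation of the indices,
`[A^⊤]_{i₁,…,i_m} = a_{i_m i₁ ⋯ i_{m−1}}`. -/
def hTranspose {m : ℕ} [NeZero m] {I : Type*} (A : (Fin m → I) → ℂ) : (Fin m → I) → ℂ :=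
  fun i => A (fun s => i (s - 1))

/-- The transpose of a BM product is the BM product of the cyclically shifted
tuple of transposes. -/
theorem bmProd_transpose {m : ℕ} [NeZero m] (hm : 1 ≤ m) {I : Type*} [Fintype I] [DecidableEq I]
    (A : Fin m → ((Fin m → I) → ℂ)) :
    hTranspose (bmProd A) = bmProd (fun t => hTranspose (A (t + 1))) := by
  funext i
  simp only [hTranspose, bmProd]
  refine Finset.sum_congr rfl fun j _ => ?_
  rw [← Equiv.prod_comp (Equiv.addRight (1 : Fin m))
      (fun t : Fin m => A t (Function.update (fun s => i (s - 1)) (t + 1) j))]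
  refine Finset.prod_congr rfl fun t _ => ?_
  simp only [Equiv.coe_addRight]
  congr 1
  funext s
  simp only [Function.update]
  by_cases h : s = t + 1 + 1
  · simp [h, sub_eq_iff_eq_add]
  · have h' : ¬ (s - 1 = t + 1) := fun hc => h (by rw [← hc]; simp)
    simp [h, h']
end

section
/- General Parseval identity (Proposition 1): Let m ≥ 2 and n ≥ 1, let A : Fin m → ((Fin m → Fin n) → ℂ) be an uncorrelated m-tuple of order-m cubic hypermatrices of side length n, and for k : Fin n let P_k := Prod_{Δ^(k)}(A) be the outer-product slices. Suppose x, y : Fin m → (Fin n → ℂ) are m-tuples of vectors such that for every k : Fin n, ∏_{t : Fin m} y t k = ∑_{j : Fin m → Fin n} P_k(j) · ∏_{t : Fin m} x t (j t) (the multilinear form in the vector tuple x with background hypermatrix P_k). Then ∑_{k : Fin n} ∏_{t : Fin m} y t k = ∑_{k : Fin n} ∏_{t : Fin m} x t k. -/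
/-- The outer-product slice `Prod_{Δ^(k)}` of an `m`-tuple of order-`m` hypermatrices. -/
noncomputable def bmSlice {m : ℕ} [NeZero m] {I : Type*} [DecidableEq I]
    (A : Fin m → ((Fin m → I) → ℂ)) (k : I) : (Fin m → I) → ℂ :=
  fun i => ∏ t : Fin m, A t (Function.update i (t + 1) k)

/-- The Kronecker delta hypermatrix. -/
noncomputable def hDelta {m : ℕ} {I : Type*} [DecidableEq I] : (Fin m → I) → ℂ :=
  fun i => if ∀ s t : Fin m, i s = i t then 1 else 0

/-- General Parseval identity (Proposition 1). -/
theorem general_parseval {m n : ℕ} [NeZero m] (hm : 2 ≤ m) (hn : 1 ≤ n)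
    (A : Fin m → ((Fin m → Fin n) → ℂ))
    (huncorr : bmProd A = hDelta)
    (x y : Fin m → (Fin n → ℂ))
    (hxy : ∀ k : Fin n, (∏ t : Fin m, y t k) =
      ∑ j : Fin m → Fin n, bmSlice A k j * ∏ t : Fin m, x t (j t)) :
    (∑ k : Fin n, ∏ t : Fin m, y t k) = ∑ k : Fin n, ∏ t : Fin m, x t k := by
  have key : ∀ j : Fin m → Fin n,
      (∑ k : Fin n, bmSlice A k j) = hDelta j := by
    intro j
    rw [← huncorr]
    rfl
  calc (∑ k : Fin n, ∏ t : Fin m, y t k)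
      = ∑ k : Fin n, ∑ j : Fin m → Fin n, bmSlice A k j * ∏ t : Fin m, x t (j t) := by
        simp_rw [hxy]
    _ = ∑ j : Fin m → Fin n, (∑ k : Fin n, bmSlice A k j) * ∏ t : Fin m, x t (j t) := by
        rw [Finset.sum_comm]; simp_rw [Finset.sum_mul]
    _ = ∑ j : Fin m → Fin n, hDelta j * ∏ t : Fin m, x t (j t) := by
        simp_rw [key]
    _ = ∑ k : Fin n, ∏ t : Fin m, x t k := by
        classical
        have h1 : ∑ j : Fin m → Fin n, hDelta j * ∏ t : Fin m, x t (j t)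
            = ∑ j ∈ Finset.univ.filter (fun j : Fin m → Fin n => ∀ s t : Fin m, j s = j t),
                ∏ t : Fin m, x t (j t) := by
          rw [Finset.sum_filter]
          apply Finset.sum_congr rfl
          intro j _
          by_cases h : ∀ s t : Fin m, j s = j t <;> simp [hDelta, h]
        rw [h1]
        apply Finset.sum_nbij' (fun j => j 0) (fun k => fun _ => k)
        · intro j hj; exact Finset.mem_univ _
        · intro k _; simp
        · intro j hj; funext s
          simp only [Finset.mem_filter] at hj
          exact (hj.2 s 0).symm
        · intro k _; rfl
        · intro j hj
          simp only [Finset.mem_filter] at hj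
          exact Finset.prod_congr rfl fun t _ => by rw [hj.2 t 0]
end

section
/- Let m ≥ 2, let I and J be finite types, and let A : Fin m → ((Fin m → I) → ℂ) and B : Fin m → ((Fin m → J) → ℂ) be m-tuples of order-m cubic hypermatrices. Then the BM product of the tuple of direct sums equals the direct sum of the BM products: Prod(fun t => A t ⊕ B t) = Prod(A) ⊕ Prod(B). -/
open Classical in
/-- The direct sum of order-`m` hypermatrices: `(A ⊕ B)(inl ∘ a) = A a`,
`(A ⊕ B)(inr ∘ b) = B b`, and `0` on mixed indices. -/
noncomputable def hDirectSum {m : ℕ} {I J : Type*}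
    (A : (Fin m → I) → ℂ) (B : (Fin m → J) → ℂ) : (Fin m → I ⊕ J) → ℂ := fun i =>
  if h : ∃ a : Fin m → I, i = Sum.inl ∘ a then A h.choose
  else if h' : ∃ b : Fin m → J, i = Sum.inr ∘ b then B h'.choose
  else 0

open Function Finset

lemma Fin.add_one_ne_self {m : ℕ} [NeZero m] (hm : 2 ≤ m) (t : Fin m) : t + 1 ≠ t := by
  simp [Fin.ext_iff, Nat.mod_eq_of_lt hm]

lemma exists_eq_comp_inl_or_comp_inr_or_isLeft_ne {ι α β : Type*} (i : ι → α ⊕ β) :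
    (∃ a, i = Sum.inl ∘ a) ∨ (∃ b, i = Sum.inr ∘ b) ∨ ∃ s s', (i s).isLeft ≠ (i s').isLeft := by
  by_cases hl : ∀ t, (i t).isLeft
  · choose a ha using fun t => Sum.isLeft_iff.1 (hl t)
    exact .inl ⟨a, funext ha⟩
  by_cases hr : ∀ t, (i t).isRight
  · choose b hb using fun t => Sum.isRight_iff.1 (hr t)
    exact .inr (.inl ⟨b, funext hb⟩)
  push Not at hl hr
  obtain ⟨s, hs⟩ := hr
  obtain ⟨s', hs'⟩ := hl
  exact .inr (.inr ⟨s, s', by simp_all⟩)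

section DirectSum

variable {m : ℕ} {I J : Type*} (A : (Fin m → I) → ℂ) (B : (Fin m → J) → ℂ)

lemma hDirectSum_inl (a : Fin m → I) : hDirectSum A B (Sum.inl ∘ a) = A a := by
  have h : ∃ a' : Fin m → I, (Sum.inl ∘ a : Fin m → I ⊕ J) = Sum.inl ∘ a' := ⟨a, rfl⟩
  rw [hDirectSum, dif_pos h]
  exact congrArg A (Sum.inl_injective.comp_left h.choose_spec).symm

lemma hDirectSum_inr [NeZero m] (b : Fin m → J) : hDirectSum A B (Sum.inr ∘ b) = B b := by
  have hl : ¬ ∃ a : Fin m → I, (Sum.inr ∘ b : Fin m → I ⊕ J) = Sum.inl ∘ a :=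
    fun ⟨a, ha⟩ => Sum.inr_ne_inl (congrFun ha 0)
  have hr : ∃ b' : Fin m → J, (Sum.inr ∘ b : Fin m → I ⊕ J) = Sum.inr ∘ b' := ⟨b, rfl⟩
  rw [hDirectSum, dif_neg hl, dif_pos hr]
  exact congrArg B (Sum.inr_injective.comp_left hr.choose_spec).symm

lemma hDirectSum_eq_zero_of_isLeft_ne (i : Fin m → I ⊕ J) {s s' : Fin m}
    (h : (i s).isLeft ≠ (i s').isLeft) : hDirectSum A B i = 0 := by
  have hl : ¬ ∃ a, i = Sum.inl ∘ a := by rintro ⟨a, rfl⟩; simp at h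
  have hr : ¬ ∃ b, i = Sum.inr ∘ b := by rintro ⟨b, rfl⟩; simp at h
  rw [hDirectSum, dif_neg hl, dif_neg hr]

lemma hDirectSum_update_eq_zero (i : Fin m → I ⊕ J) {k l : Fin m} (hkl : k ≠ l) {j : I ⊕ J}
    (h : (i k).isLeft ≠ j.isLeft) : hDirectSum A B (update i l j) = 0 :=
  hDirectSum_eq_zero_of_isLeft_ne A B _ (s := k) (s' := l) (by rwa [update_of_ne hkl, update_self])

end DirectSum

section BMProd

variable {m : ℕ} [NeZero m] {I J : Type*} [Fintype I] [DecidableEq I]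
  [Fintype J] [DecidableEq J] (A : Fin m → (Fin m → I) → ℂ) (B : Fin m → (Fin m → J) → ℂ)

lemma bmProd_hDirectSum_inl (hm : 2 ≤ m) (a : Fin m → I) :
    bmProd (fun t => hDirectSum (A t) (B t)) (Sum.inl ∘ a) = bmProd A a := by
  have hI (j : I) : ∏ t, hDirectSum (A t) (B t) (update (Sum.inl ∘ a) (t + 1) (Sum.inl j)) =
      ∏ t, A t (update a (t + 1) j) :=
    prod_congr rfl fun t _ => by rw [← comp_update, hDirectSum_inl]
  have hJ (j : J) : ∏ t, hDirectSum (A t) (B t) (update (Sum.inl ∘ a) (t + 1) (Sum.inr j)) = 0 :=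
    prod_eq_zero (mem_univ 0)
      (hDirectSum_update_eq_zero _ _ _ (Fin.add_one_ne_self hm 0).symm (by simp))
  simp only [bmProd, Fintype.sum_sum_type, hI, hJ, sum_const_zero, add_zero]

lemma bmProd_hDirectSum_inr (hm : 2 ≤ m) (b : Fin m → J) :
    bmProd (fun t => hDirectSum (A t) (B t)) (Sum.inr ∘ b) = bmProd B b := by
  have hI (j : I) : ∏ t, hDirectSum (A t) (B t) (update (Sum.inr ∘ b) (t + 1) (Sum.inl j)) = 0 :=
    prod_eq_zero (mem_univ 0)
      (hDirectSum_update_eq_zero _ _ _ (Fin.add_one_ne_self hm 0).symm (by simp))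
  have hJ (j : J) : ∏ t, hDirectSum (A t) (B t) (update (Sum.inr ∘ b) (t + 1) (Sum.inr j)) =
      ∏ t, B t (update b (t + 1) j) :=
    prod_congr rfl fun t _ => by rw [← comp_update, hDirectSum_inr]
  simp only [bmProd, Fintype.sum_sum_type, hI, hJ, sum_const_zero, zero_add]

lemma bmProd_hDirectSum_eq_zero_of_isLeft_ne (hm : 2 ≤ m) (i : Fin m → I ⊕ J) {s s' : Fin m}
    (h : (i s).isLeft ≠ (i s').isLeft) : bmProd (fun t => hDirectSum (A t) (B t)) i = 0 := by
  refine sum_eq_zero fun j _ => ?_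
  obtain ⟨t, ht⟩ : ∃ t, (i t).isLeft ≠ j.isLeft := by
    by_contra! hc
    exact h ((hc s).trans (hc s').symm)
  exact prod_eq_zero (mem_univ t)
    (hDirectSum_update_eq_zero _ _ _ (Fin.add_one_ne_self hm t).symm ht)

end BMProd

/-- The BM product of a tuple of direct sums is the direct sum of the BM products. -/
theorem bmProd_directSum {m : ℕ} [NeZero m] (hm : 2 ≤ m)
    {I J : Type*} [Fintype I] [DecidableEq I] [Fintype J] [DecidableEq J]
    (A : Fin m → ((Fin m → I) → ℂ)) (B : Fin m → ((Fin m → J) → ℂ)) :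
    bmProd (fun t => hDirectSum (A t) (B t)) = hDirectSum (bmProd A) (bmProd B) := by
  funext i
  rcases exists_eq_comp_inl_or_comp_inr_or_isLeft_ne i with ⟨a, rfl⟩ | ⟨b, rfl⟩ | ⟨s, s', h⟩
  · rw [bmProd_hDirectSum_inl A B hm, hDirectSum_inl]
  · rw [bmProd_hDirectSum_inr A B hm, hDirectSum_inr]
  · rw [bmProd_hDirectSum_eq_zero_of_isLeft_ne A B hm i h, hDirectSum_eq_zero_of_isLeft_ne _ _ i h]
end

section
/- Let m ≥ 1, let I and J be finite types, and let A : Fin m → ((Fin m → I) → ℂ) and B : Fin m → ((Fin m → J) → ℂ) be m-tuples of order-m cubic hypermatrices. Then the BM product of the tuple of Kronecker products equals the Kronecker product of the BM products: Prod(fun t => A t ⊗ B t) = Prod(A) ⊗ Prod(B). This extends to hypermatrices the matrix mixed-product identity (A₁ ⊗ B₁)·(A₂ ⊗ B₂) = (A₁·A₂) ⊗ (B₁·B₂). -/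
/-- The Kronecker product of order-`m` hypermatrices over `I` and `J`:
`(A ⊗ B)(i) = A(fun t => (i t).1) · B(fun t => (i t).2)`. -/
noncomputable def hKron {m : ℕ} {I J : Type*}
    (A : (Fin m → I) → ℂ) (B : (Fin m → J) → ℂ) : (Fin m → I × J) → ℂ :=
  fun i => A (fun t => (i t).1) * B (fun t => (i t).2)

/-- The BM product of a tuple of Kronecker products is the Kronecker product of
the BM products: the hypermatrix mixed-product identity. -/
theorem bmProd_kron {m : ℕ} [NeZero m] (hm : 1 ≤ m)
    {I J : Type*} [Fintype I] [DecidableEq I] [Fintype J] [DecidableEq J]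
    (A : Fin m → ((Fin m → I) → ℂ)) (B : Fin m → ((Fin m → J) → ℂ)) :
    bmProd (fun t => hKron (A t) (B t)) = hKron (bmProd A) (bmProd B) := by
  funext i
  simp only [bmProd, hKron, Finset.prod_mul_distrib, Finset.sum_mul_sum]
  rw [← Fintype.sum_prod_type']
  refine Finset.sum_congr rfl fun j _ => ?_
  congr 1 <;> refine Finset.prod_congr rfl fun t _ => ?_ <;> congr 1 <;>
    funext t' <;> simp [Function.update_apply] <;> split_ifs <;> rfl
end

section
/- Proposition 4: Let n ≥ 1 and define the n×n×n hypermatrices F, G, H : Fin n → Fin n → Fin n → ℂ by F u t w = n^{−1/3}·exp(2πi·t·(u−w)²/n), G u v t = n^{−1/3}·exp(2πi·t·(u−v)²/n), and H t v w = n^{−1/3}·exp(2πi·t·(v−w)²/n), where the indices are taken as integers in {0,…,n−1} and n^{−1/3} is the real cube root. Then (F, G, H) is an uncorrelated triple, i.e. Prod(F,G,H) = Δ, if and only if the congruence x² + 3y² ≡ 0 (mod n) admits no solution other than the trivial one (equivalently: for all x, y : ZMod n, x² + 3·y² = 0 implies x = 0 and y = 0). -/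
/-! The three factors of the `t`-th summand of the BM product multiply to
`n⁻¹ · e(t S / n)` with `S = (i - k)² + (i - j)² + (j - k)²`, so orthogonality of the
additive characters of `ZMod n` turns the `(i, j, k)` entry into the indicator of `S ≡ 0`.
With `a = i - j`, `b = j - k` this is `(a + b)² + a² + b² = 0`, and the substitutions
`(x, y) = (a - b, a + b)` and `(a, b) = (x + y, y - x)` carry either quadratic form to twice
the other. The factor `2` is harmless: a `2`-torsion `z` yields the solutions `(z, -z)`,
resp. `(z, z)`, so the nondegeneracy of either form kills all `2`-torsion. -/

open Complex Finset Function
open scoped Real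

theorem forall_sq_add_three_mul_sq_eq_zero_iff {R : Type*} [CommRing R] :
    (∀ a b : R, (a + b) ^ 2 + a ^ 2 + b ^ 2 = 0 → a = 0 ∧ b = 0) ↔
      ∀ x y : R, x ^ 2 + 3 * y ^ 2 = 0 → x = 0 ∧ y = 0 := by
  constructor
  · intro h x y hxy
    obtain ⟨hsum, hdiff⟩ := h (x + y) (y - x) (by linear_combination 2 * hxy)
    have hx2 : 2 * x = 0 := by linear_combination hsum - hdiff
    have hy2 : 2 * y = 0 := by linear_combination hsum + hdiff
    exact ⟨(h x (-x) (by linear_combination x * hx2)).1,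
      (h y (-y) (by linear_combination y * hy2)).1⟩
  · intro h a b hab
    obtain ⟨hdiff, hsum⟩ := h (a - b) (a + b) (by linear_combination 2 * hab)
    have ha2 : 2 * a = 0 := by linear_combination hsum + hdiff
    have hb2 : 2 * b = 0 := by linear_combination hsum - hdiff
    exact ⟨(h a a (by linear_combination 2 * a * ha2)).1,
      (h b b (by linear_combination 2 * b * hb2)).1⟩

theorem forall_sub_sub_imp_iff {T R : Type*} [AddCommGroup R] {ι : T → R} (hι : Bijective ι)
    (P : R → R → Prop) :
    (∀ i j k, P (ι i - ι j) (ι j - ι k) → i = j ∧ j = k) ↔ ∀ a b, P a b → a = 0 ∧ b = 0 := by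
  constructor
  · intro h a b hab
    obtain ⟨i, hi⟩ := hι.2 (a + b)
    obtain ⟨j, hj⟩ := hι.2 b
    obtain ⟨k, hk⟩ := hι.2 0
    obtain ⟨rfl, rfl⟩ := h i j k (by simpa [hi, hj, hk] using hab)
    have hb : b = 0 := hj.symm.trans hk
    exact ⟨by simpa [hb] using hi.symm.trans hk, hb⟩
  · intro h i j k hP
    obtain ⟨hij, hjk⟩ := h _ _ hP
    exact ⟨hι.1 (sub_eq_zero.1 hij), hι.1 (sub_eq_zero.1 hjk)⟩

theorem ite_one_zero_eq_ite_one_zero_iff {M : Type*} [Zero M] [One M] [NeZero (1 : M)]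
    {p q : Prop} [Decidable p] [Decidable q] (hqp : q → p) :
    ((if p then 1 else 0 : M) = if q then 1 else 0) ↔ (p → q) := by
  by_cases hq : q <;> by_cases hp : p <;> simp_all

theorem ZMod.natCast_fin_val_bijective (n : ℕ) [NeZero n] :
    Bijective fun i : Fin n => ((i : ℕ) : ZMod n) := by
  refine (Fintype.bijective_iff_injective_and_card _).2 ⟨fun i j hij => ?_, by simp⟩
  have := congrArg ZMod.val hij
  rwa [ZMod.val_cast_of_lt i.isLt, ZMod.val_cast_of_lt j.isLt, Fin.val_inj] at this

theorem sum_fin_exp_two_pi_I_mul_div (n : ℕ) [NeZero n] (S : ℤ) :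
    ∑ t : Fin n, exp (2 * π * I * (t : ℕ) * S / n) = if (S : ZMod n) = 0 then (n : ℂ) else 0 := by
  have hterm (t : Fin n) :
      exp (2 * π * I * (t : ℕ) * S / n) = ZMod.stdAddChar (((t : ℕ) : ZMod n) * (S : ZMod n)) := by
    rw [show ((t : ℕ) : ZMod n) * (S : ZMod n) = (((t : ℕ) * S : ℤ) : ZMod n) by push_cast; rfl,
      ZMod.stdAddChar_coe]
    push_cast
    ring_nf
  simp_rw [hterm]
  rw [(ZMod.natCast_fin_val_bijective n).sum_comp (fun x => ZMod.stdAddChar (x * (S : ZMod n))),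
    AddChar.sum_mulShift _ (ZMod.isPrimitive_stdAddChar n), ZMod.card, Nat.cast_ite,
    Nat.cast_zero]

theorem Real.rpow_neg_one_third_pow_three {x : ℝ} (hx : 0 ≤ x) :
    (x ^ (-(1 / 3 : ℝ))) ^ 3 = x⁻¹ := by
  rw [Real.rpow_neg hx, inv_pow, one_div, ← Nat.cast_ofNat,
    Real.rpow_inv_natCast_pow hx three_ne_zero]

/-- The common shape of `F`, `G`, `H`: `d` is the difference of the two indices other than `t`. -/
noncomputable def dftEntry (n t : ℕ) (d : ℤ) : ℂ :=
  (((n : ℝ) ^ (-(1 / 3 : ℝ)) : ℝ) : ℂ) * exp (2 * π * I * t * d ^ 2 / n)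

theorem dftEntry_mul_mul (n t : ℕ) (a b c : ℤ) :
    dftEntry n t a * dftEntry n t b * dftEntry n t c =
      (n : ℂ)⁻¹ * exp (2 * π * I * t * ((a ^ 2 + b ^ 2 + c ^ 2 : ℤ) : ℂ) / n) := by
  have hcube : ((((n : ℝ) ^ (-(1 / 3 : ℝ)) : ℝ) : ℂ)) ^ 3 = (n : ℂ)⁻¹ := by
    rw [← ofReal_pow, Real.rpow_neg_one_third_pow_three (Nat.cast_nonneg n)]
    push_cast; rfl
  simp only [dftEntry, ← hcube]
  rw [show ∀ c e₁ e₂ e₃ : ℂ, c * e₁ * (c * e₂) * (c * e₃) = c ^ 3 * (e₁ * e₂ * e₃) by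
    intros; ring, ← exp_add, ← exp_add]
  push_cast
  ring_nf

theorem sum_dftEntry_mul_mul (n : ℕ) [NeZero n] (a b c : ℤ) :
    ∑ t : Fin n, dftEntry n t a * dftEntry n t b * dftEntry n t c =
      if ((a ^ 2 + b ^ 2 + c ^ 2 : ℤ) : ZMod n) = 0 then 1 else 0 := by
  simp_rw [dftEntry_mul_mul, ← mul_sum, sum_fin_exp_two_pi_I_mul_div]
  split_ifs <;> simp [NeZero.ne]

/-- Proposition 4: the third-order DFT hypermatrices `F`, `G`, `H` of side length `n`
form an uncorrelated triple if and only if `x² + 3y² ≡ 0 (mod n)` has only the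
trivial solution. -/
theorem third_order_dft_uncorrelated_iff (n : ℕ) (hn : 1 ≤ n)
    (F G H : Fin n → Fin n → Fin n → ℂ)
    (hF : ∀ u t w : Fin n, F u t w = (((n : ℝ) ^ (-(1/3 : ℝ)) : ℝ) : ℂ) *
      Complex.exp (2 * (Real.pi : ℂ) * Complex.I * ((t : ℕ) : ℂ) *
        (((u : ℕ) : ℂ) - ((w : ℕ) : ℂ)) ^ 2 / (n : ℂ)))
    (hG : ∀ u v t : Fin n, G u v t = (((n : ℝ) ^ (-(1/3 : ℝ)) : ℝ) : ℂ) *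
      Complex.exp (2 * (Real.pi : ℂ) * Complex.I * ((t : ℕ) : ℂ) *
        (((u : ℕ) : ℂ) - ((v : ℕ) : ℂ)) ^ 2 / (n : ℂ)))
    (hH : ∀ t v w : Fin n, H t v w = (((n : ℝ) ^ (-(1/3 : ℝ)) : ℝ) : ℂ) *
      Complex.exp (2 * (Real.pi : ℂ) * Complex.I * ((t : ℕ) : ℂ) *
        (((v : ℕ) : ℂ) - ((w : ℕ) : ℂ)) ^ 2 / (n : ℂ))) :
    (∀ i j k : Fin n,
        (∑ t : Fin n, F i t k * G i j t * H t j k) = if i = j ∧ j = k then 1 else 0)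
      ↔ (∀ x y : ZMod n, x ^ 2 + 3 * y ^ 2 = 0 → x = 0 ∧ y = 0) := by
  have : NeZero n := ⟨by omega⟩
  have hdft (t a b : Fin n) : (((n : ℝ) ^ (-(1/3 : ℝ)) : ℝ) : ℂ) *
      exp (2 * π * I * ((t : ℕ) : ℂ) * (((a : ℕ) : ℂ) - ((b : ℕ) : ℂ)) ^ 2 / n) =
        dftEntry n t ((a : ℕ) - (b : ℕ) : ℤ) := by
    simp [dftEntry]
  let ι (i : Fin n) : ZMod n := (i : ℕ)
  let Q (a b : ZMod n) : Prop := (a + b) ^ 2 + a ^ 2 + b ^ 2 = 0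
  have hentry (i j k : Fin n) : ∑ t, F i t k * G i j t * H t j k =
      if Q (ι i - ι j) (ι j - ι k) then 1 else 0 := by
    simp only [hF, hG, hH, hdft, sum_dftEntry_mul_mul, Q, ι]
    push_cast
    ring_nf
  have hdiag (i j k : Fin n) (h : i = j ∧ j = k) : Q (ι i - ι j) (ι j - ι k) := by
    obtain ⟨rfl, rfl⟩ := h
    simp [Q]
  calc (∀ i j k : Fin n, ∑ t, F i t k * G i j t * H t j k = if i = j ∧ j = k then 1 else 0)
      ↔ ∀ i j k, Q (ι i - ι j) (ι j - ι k) → i = j ∧ j = k :=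
        forall₃_congr fun i j k => by
          rw [hentry]
          exact ite_one_zero_eq_ite_one_zero_iff (hdiag i j k)
    _ ↔ ∀ a b, Q a b → a = 0 ∧ b = 0 := forall_sub_sub_imp_iff (ZMod.natCast_fin_val_bijective n) Q
    _ ↔ _ := forall_sq_add_three_mul_sq_eq_zero_iff
end

section
/- Lemma 5a: Let m ≥ 1, let w : ZMod m → Bool be a cyclic binary word of length m, and let p be a natural number. Suppose that w i = w (i − p) for every i : ZMod m with i ≠ 0 (but not necessarily for i = 0). Then w has a period π (possibly m) of which p is a multiple: there exists a natural number π > 0 with π ∣ m, π ∣ p, and w (i + π) = w i for all i : ZMod m. -/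
/-- Lemma 5a: if a cyclic binary word `w` of length `m` satisfies `w i = w (i − p)` for
every `i ≠ 0`, then `w` has a period `π` (dividing `m`) of which `p` is a multiple. -/
theorem cyclic_word_period {m : ℕ} (hm : 1 ≤ m) (w : ZMod m → Bool) (p : ℕ)
    (hw : ∀ i : ZMod m, i ≠ 0 → w i = w (i - (p : ZMod m))) :
    ∃ π : ℕ, 0 < π ∧ π ∣ m ∧ π ∣ p ∧ ∀ i : ZMod m, w (i + (π : ZMod m)) = w i := by
  haveI : NeZero m := ⟨by omega⟩
  -- chain argument to cover i = 0
  have key : ∀ k : ℕ, w (-(p:ZMod m)) = w (-(((k+1) * p : ℕ) : ZMod m)) ∨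
      w (-(p:ZMod m)) = w 0 := by
    intro k
    induction k with
    | zero => left; norm_num
    | succ k ih =>
      rcases ih with h | h
      · by_cases hz : (((k+1) * p : ℕ) : ZMod m) = 0
        · right; rw [h, hz]; simp
        · left
          have hne : -(((k+1) * p : ℕ) : ZMod m) ≠ 0 := by simpa using hz
          have := hw _ hne
          rw [h, this]
          congr 1
          push_cast
          ring
      · right; exact h
  have h0 : w (-(p:ZMod m)) = w 0 := by
    rcases key (m - 1) with h | h
    · rw [h]
      have hz : (((m-1+1) * p : ℕ) : ZMod m) = 0 := by
        have hm1 : m - 1 + 1 = m := by omega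
        rw [hm1]
        push_cast
        simp
      rw [hz]; simp
    · exact h
  have hall : ∀ i : ZMod m, w (i - (p:ZMod m)) = w i := by
    intro i
    by_cases hi : i = 0
    · subst hi; simpa using h0
    · exact (hw i hi).symm
  have hstep : ∀ i : ZMod m, w (i + (p:ZMod m)) = w i := by
    intro i; have := hall (i + p); simpa using this.symm
  have hmul : ∀ (k : ℕ) (i : ZMod m), w (i + ((k * p : ℕ):ZMod m)) = w i := by
    intro k
    induction k with
    | zero => simp
    | succ k ih =>
      intro i
      have hc : ((((k+1) * p :ℕ)) : ZMod m) = ((k*p:ℕ):ZMod m) + (p:ZMod m) := by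
        push_cast; ring
      rw [hc, ← add_assoc, hstep, ih]
  refine ⟨Nat.gcd m p, Nat.gcd_pos_of_pos_left _ (by omega), Nat.gcd_dvd_left _ _,
    Nat.gcd_dvd_right _ _, ?_⟩
  intro i
  have hbez := Nat.gcd_eq_gcd_ab m p
  have hb : ((Nat.gcd m p : ℕ) : ZMod m) = ((Nat.gcdB m p : ℤ) : ZMod m) * (p : ZMod m) := by
    have h2 : (((Nat.gcd m p : ℤ)) : ZMod m) =
        ((m * Nat.gcdA m p + p * Nat.gcdB m p : ℤ) : ZMod m) := by rw [← hbez]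
    push_cast at h2
    simpa [mul_comm] using h2
  set a : ℕ := ((Nat.gcdB m p : ℤ) : ZMod m).val with ha
  have hav : ((a : ℕ) : ZMod m) = ((Nat.gcdB m p : ℤ) : ZMod m) := by
    rw [ha, ZMod.natCast_val, ZMod.cast_id]
  have : ((Nat.gcd m p : ℕ) : ZMod m) = ((a * p : ℕ) : ZMod m) := by
    push_cast
    rw [hav, hb]
  rw [this]
  exact hmul a i
end

section
/- For every odd integer m > 1, the number of binary necklaces of length m, namely (1/m)·∑_{k ∣ m} φ(k)·2^{m/k}, is even; equivalently, 2m divides ∑_{k ∈ divisors(m)} φ(k)·2^{m/k}, where the sum ranges over the positive divisors k of m and φ denotes Euler's totient function. -/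
/-!
Words `ZMod m → Fin n` under rotation: a rotation by `i` fixes exactly `n ^ gcd(m, i)` words, so
Burnside's lemma gives `m ∣ ∑_{i < m} n ^ gcd(m, i) = ∑_{k ∣ m} φ(k) n^{m/k}`. For `n = 2` every
summand `φ(k) 2^{m/k}` is even (`φ(k)` is even for `k > 2`, and `m/k ≥ 1`), and `m` odd is coprime
to `2`.
-/

open Finset AddAction
open scoped Nat

theorem ZMod.index_zmultiples_natCast {m : ℕ} [NeZero m] (i : ℕ) :
    (AddSubgroup.zmultiples (i : ZMod m)).index = m.gcd i := by
  have h := (AddSubgroup.zmultiples (i : ZMod m)).index_mul_card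
  rw [Nat.card_zmultiples, ZMod.addOrderOf_coe i (NeZero.ne m), Nat.card_zmod] at h
  have hgcd := Nat.gcd_dvd_left m i
  have hpos : 0 < m / m.gcd i :=
    Nat.div_pos (Nat.le_of_dvd (NeZero.pos m) hgcd) (Nat.gcd_pos_of_pos_left i (NeZero.pos m))
  rw [← Nat.div_eq_of_eq_mul_left hpos h.symm, Nat.div_div_self hgcd (NeZero.ne m)]

theorem ZMod.sum_univ_eq_sum_range {M : Type*} [AddCommMonoid M] {m : ℕ} [NeZero m]
    (f : ZMod m → M) : ∑ a, f a = ∑ i ∈ range m, f i :=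
  Finset.sum_nbij' ZMod.val Nat.cast (fun a _ => mem_range.mpr a.val_lt) (fun _ _ => mem_univ _)
    (fun a _ => ZMod.natCast_zmod_val a) (fun _ hi => ZMod.val_cast_of_lt (mem_range.mp hi))
    (fun a _ => by rw [ZMod.natCast_zmod_val])

section ArrowAction

attribute [local instance] arrowAddAction

variable {G α : Type*} [AddCommGroup G]

def fixedByEquivQuotientZMultiples (g : G) :
    fixedBy (G → α) g ≃ (G ⧸ AddSubgroup.zmultiples g → α) where
  toFun F := Quotient.lift F.1 fun a b hab => by
    obtain ⟨j, hj⟩ := AddSubgroup.mem_zmultiples_iff.mp (QuotientAddGroup.leftRel_apply.mp hab)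
    have hF := congrFun (fixedBy_subset_fixedBy_zsmul (G → α) g j F.2) b
    change F.1 (-(j • g) + b) = F.1 b at hF
    rwa [hj, neg_add_rev, neg_neg, neg_add_cancel_comm] at hF
  invFun q := ⟨q ∘ QuotientAddGroup.mk, funext fun a => congrArg q <| QuotientAddGroup.eq.mpr <| by
    simp⟩
  left_inv _ := rfl
  right_inv q := funext fun x => Quotient.inductionOn x fun _ => rfl

theorem card_fixedBy_arrow [Finite G] (g : G) :
    Nat.card (fixedBy (G → α) g) = Nat.card α ^ (AddSubgroup.zmultiples g).index := by
  rw [Nat.card_congr (fixedByEquivQuotientZMultiples g), Nat.card_fun, AddSubgroup.index]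

theorem Nat.dvd_sum_gcd_pow (m n : ℕ) : m ∣ ∑ i ∈ range m, n ^ m.gcd i := by
  rcases m.eq_zero_or_pos with rfl | hm
  · simp
  have : NeZero m := ⟨hm.ne'⟩
  classical
  have burnside := sum_card_fixedBy_eq_card_orbits_mul_card_addGroup (ZMod m) (ZMod m → Fin n)
  have hfix : ∀ i : ℕ, Fintype.card (fixedBy (ZMod m → Fin n) (i : ZMod m)) = n ^ m.gcd i :=
    fun i => by
      rw [← Nat.card_eq_fintype_card, card_fixedBy_arrow, Nat.card_eq_fintype_card,
        Fintype.card_fin, ZMod.index_zmultiples_natCast]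
  rw [ZMod.sum_univ_eq_sum_range, ZMod.card] at burnside
  simp only [hfix] at burnside
  exact burnside ▸ dvd_mul_left m _

end ArrowAction

theorem Nat.sum_range_comp_gcd {M : Type*} [AddCommMonoid M] (m : ℕ) (f : ℕ → M) :
    ∑ i ∈ range m, f (m.gcd i) = ∑ k ∈ m.divisors, φ k • f (m / k) := by
  rcases m.eq_zero_or_pos with rfl | hm
  · simp
  rw [← sum_fiberwise_of_maps_to (t := m.divisors) (g := m.gcd)
    fun i _ => mem_divisors.mpr ⟨m.gcd_dvd_left i, hm.ne'⟩,
    ← Nat.sum_div_divisors m (fun k => φ k • f (m / k))]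
  refine sum_congr rfl fun d hd => ?_
  have hdm := dvd_of_mem_divisors hd
  rw [Nat.div_div_self hdm hm.ne', totient_div_of_dvd hdm, ← sum_const]
  exact sum_congr rfl fun i hi => by rw [(mem_filter.mp hi).2]

theorem Nat.dvd_sum_totient_mul_pow (m n : ℕ) : m ∣ ∑ k ∈ m.divisors, φ k * n ^ (m / k) := by
  simpa only [sum_range_comp_gcd, smul_eq_mul] using dvd_sum_gcd_pow m n

theorem Nat.two_dvd_sum_totient_mul_pow {n : ℕ} (hn : Even n) (m : ℕ) :
    2 ∣ ∑ k ∈ m.divisors, φ k * n ^ (m / k) := by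
  refine dvd_sum fun k hk => ?_
  rcases le_or_gt k 2 with hk2 | hk2
  · have hmk : 0 < m / k := Nat.div_pos (Nat.divisor_le hk) (Nat.pos_of_mem_divisors hk)
    exact (hn.two_dvd.pow hmk.ne').mul_left _
  · exact (totient_even hk2).two_dvd.mul_right _

theorem necklace_count_even_general (m : ℕ) (hodd : Odd m) :
    2 * m ∣ ∑ k ∈ Nat.divisors m, Nat.totient k * 2 ^ (m / k) :=
  hodd.coprime_two_left.mul_dvd_of_dvd_of_dvd (Nat.two_dvd_sum_totient_mul_pow even_two m)
    (Nat.dvd_sum_totient_mul_pow m 2)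

/-- For every odd `m > 1`, the number of binary necklaces of length `m`,
`(1/m)·∑_{k ∣ m} φ(k)·2^{m/k}`, is even; equivalently `2m` divides the sum. -/
theorem necklace_count_even (m : ℕ) (hodd : Odd m) (hm : 1 < m) :
    2 * m ∣ ∑ k ∈ Nat.divisors m, Nat.totient k * 2 ^ (m / k) :=
  necklace_count_even_general m hodd
end

section
/- Every finite connected simple graph with an even number of vertices contains a spanning subgraph in which every vertex has odd degree: if V is a finite type with Fintype.card V even and G : SimpleGraph V is connected, then there exists a simple graph H on V with H ≤ G such that the degree of every vertex of H is odd. -/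
attribute [local instance] Classical.propDecidable

/-!
A `T`-join of `G` is a subgraph `H ≤ G` whose odd-degree vertices are exactly `T`. Degrees add
modulo 2 under symmetric difference of graphs, so the sets `T` admitting a `T`-join are closed
under `∆`; an edge `ab` is an `{a} ∆ {b}`-join, hence so is (a subgraph of) any walk from `a`
to `b`. In a connected graph, inducting over `T` with a fixed root `r`, either `T` or `T ∆ {r}`
has a join, and the handshake lemma excludes the latter when `#T` is even. Take `T = V`.
-/

open scoped symmDiff
open Finset

theorem Finset.odd_card_symmDiff_iff {α : Type*} [DecidableEq α] (s t : Finset α) :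
    Odd #(s ∆ t) ↔ (Odd #s ↔ Even #t) := by
  have hs := card_sdiff_add_card_inter s t
  have ht := card_sdiff_add_card_inter t s
  have hst : #(s ∆ t) = #(s \ t) + #(t \ s) := card_union_of_disjoint disjoint_sdiff_sdiff
  rw [inter_comm] at ht
  simp only [Nat.odd_iff, Nat.even_iff]
  omega

namespace SimpleGraph

variable {V : Type*} [Fintype V]

theorem neighborFinset_symmDiff (H K : SimpleGraph V) (v : V) :
    (H ∆ K).neighborFinset v = H.neighborFinset v ∆ K.neighborFinset v := by
  ext w
  rw [mem_symmDiff, mem_neighborFinset, mem_neighborFinset, mem_neighborFinset]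
  simp only [symmDiff_def, sup_adj, sdiff_adj]

theorem odd_degree_symmDiff_iff (H K : SimpleGraph V) (v : V) :
    Odd ((H ∆ K).degree v) ↔ (Odd (H.degree v) ↔ Even (K.degree v)) := by
  simp only [← card_neighborFinset_eq_degree, neighborFinset_symmDiff]
  exact odd_card_symmDiff_iff _ _

theorem odd_degree_edge_iff (a b v : V) :
    Odd ((edge a b).degree v) ↔ v ∈ ({a} ∆ {b} : Finset V) := by
  rcases eq_or_ne a b with rfl | hab
  · simp
  have : (edge a b).neighborFinset v = if v = a then {b} else if v = b then {a} else ∅ := by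
    ext w
    simp only [mem_neighborFinset, edge_adj]
    split_ifs <;> simp_all
  rw [← card_neighborFinset_eq_degree, this]
  split_ifs <;> simp_all [mem_symmDiff]

def HasTJoin (G : SimpleGraph V) (T : Finset V) : Prop :=
  ∃ H ≤ G, ∀ v, Odd (H.degree v) ↔ v ∈ T

variable {G : SimpleGraph V}

theorem hasTJoin_empty : G.HasTJoin ∅ :=
  ⟨⊥, bot_le, fun v => by simp⟩

theorem HasTJoin.symmDiff {S T : Finset V} (hS : G.HasTJoin S) (hT : G.HasTJoin T) :
    G.HasTJoin (S ∆ T) := by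
  obtain ⟨H, hHG, hH⟩ := hS
  obtain ⟨K, hKG, hK⟩ := hT
  refine ⟨H ∆ K, symmDiff_le_sup.trans (sup_le hHG hKG), fun v => ?_⟩
  rw [odd_degree_symmDiff_iff, hH, ← Nat.not_odd_iff_even, hK, mem_symmDiff]
  tauto

theorem HasTJoin.even_card {T : Finset V} (hT : G.HasTJoin T) : Even #T := by
  obtain ⟨H, -, hH⟩ := hT
  convert H.even_card_odd_degree_vertices
  ext v
  simp [hH]

theorem Walk.hasTJoin {a b : V} (p : G.Walk a b) : G.HasTJoin ({a} ∆ {b}) := by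
  induction p with
  | nil => simpa using hasTJoin_empty
  | @cons a b c hab _ ih =>
    have hedge : G.HasTJoin ({a} ∆ {b}) :=
      ⟨edge a b, (edge_le_iff G).mpr (.inr hab), fun v => by convert odd_degree_edge_iff a b v⟩
    simpa [symmDiff_assoc] using hedge.symmDiff ih

theorem Connected.hasTJoin_or_hasTJoin_symmDiff_singleton (hG : G.Connected) (r : V)
    (T : Finset V) : G.HasTJoin T ∨ G.HasTJoin (T ∆ {r}) := by
  induction T using Finset.induction_on with
  | empty => exact Or.inl hasTJoin_empty
  | @insert x T hx ih =>
    have hxr : G.HasTJoin ({x} ∆ {r}) := (hG.preconnected x r).some.hasTJoin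
    have hinsert : insert x T = T ∆ {x} := by
      rw [(disjoint_singleton_right.mpr hx).symmDiff_eq_sup, sup_eq_union, union_comm, insert_eq]
    rw [hinsert]
    rcases ih with hT | hT
    · right
      rw [symmDiff_assoc]
      exact hT.symmDiff hxr
    · left
      have hcancel : T ∆ {r} ∆ ({x} ∆ {r}) = T ∆ {x} := by
        rw [symmDiff_symmDiff_symmDiff_comm, symmDiff_self, symmDiff_bot]
      exact hcancel ▸ hT.symmDiff hxr

theorem Connected.hasTJoin_of_even_card (hG : G.Connected) {T : Finset V} (hT : Even #T) :
    G.HasTJoin T := by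
  obtain ⟨r⟩ := hG.nonempty
  refine (hG.hasTJoin_or_hasTJoin_symmDiff_singleton r T).resolve_right fun h => ?_
  have h_even := h.even_card
  rw [← Nat.not_odd_iff_even, odd_card_symmDiff_iff, card_singleton] at h_even
  exact h_even (iff_of_false (Nat.not_odd_iff_even.mpr hT) (by decide))

end SimpleGraph

/-- Every finite connected simple graph with an even number of vertices contains a
spanning subgraph in which every vertex has odd degree. -/
theorem exists_odd_degree_subgraph {V : Type*} [Fintype V]
    (G : SimpleGraph V) (hG : G.Connected) (hV : Even (Fintype.card V)) :
    ∃ H : SimpleGraph V, H ≤ G ∧ ∀ v : V, Odd (H.degree v) := by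
  obtain ⟨H, hHG, hH⟩ := hG.hasTJoin_of_even_card (T := Finset.univ) (by simpa using hV)
  exact ⟨H, hHG, fun v => (hH v).mpr (mem_univ v)⟩
end

section
/- (Inductive step of Theorem 7.) Say that a third-order cubic hypermatrix A : I → I → I → ℂ over a finite index type I admits a third-order spectral decomposition if there exist U, V, W : I → I → I → ℂ and symmetric functions μ, ν, ω : I → I → ℂ (μ j k = μ k j, etc.) such that, writing D_μ i j k := (if i = k then μ j k else 0) and similarly D_ν, D_ω, one has Prod(U, V^{⊤²}, W^⊤) = Δ and A = Prod( Prod(U, D_μ, D_μ^⊤), Prod(V, D_ν, D_ν^⊤)^{⊤²}, Prod(W, D_ω, D_ω^⊤)^⊤ ). If A over a finite type I and B over a finite type J each admit a third-order spectral decomposition, then the Kronecker product A ⊗ B over I × J and the direct sum A ⊕ B over I ⊕ J each admit a third-order spectral decomposition. (Theorem 7 then follows by induction: every hypermatrix generated by arbitrary combinations of direct sums and Kronecker products of 2×2×2 hypermatrices each admitting a spectral decomposition itself admits one.) -/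
/-- BM product of a triple of third-order cubic hypermatrices. -/
noncomputable def prod3 {I : Type*} [Fintype I] (A B C : I → I → I → ℂ) : I → I → I → ℂ :=
  fun i j k => ∑ t : I, A i t k * B i j t * C t j k

/-- Transpose of a third-order hypermatrix: `A^⊤(i,j,k) = A k i j`. -/
def tr3 {I : Type*} (A : I → I → I → ℂ) : I → I → I → ℂ := fun i j k => A k i j

/-- Third-order Kronecker delta. -/
def delta3 {I : Type*} [DecidableEq I] : I → I → I → ℂ :=
  fun i j k => if i = j ∧ j = k then 1 else 0

/-- Third-order diagonal hypermatrix with entries `μ j k` on the slices `i = k`. -/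
def diag3 {I : Type*} [DecidableEq I] (μ : I → I → ℂ) : I → I → I → ℂ :=
  fun i j k => if i = k then μ j k else 0

/-- Kronecker product of third-order hypermatrices. -/
def kron3 {I J : Type*} (A : I → I → I → ℂ) (B : J → J → J → ℂ) :
    (I × J) → (I × J) → (I × J) → ℂ :=
  fun i j k => A i.1 j.1 k.1 * B i.2 j.2 k.2

/-- Direct sum of third-order hypermatrices. -/
def dsum3 {I J : Type*} (A : I → I → I → ℂ) (B : J → J → J → ℂ) :
    (I ⊕ J) → (I ⊕ J) → (I ⊕ J) → ℂ
  | .inl a, .inl b, .inl c => A a b c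
  | .inr a, .inr b, .inr c => B a b c
  | _, _, _ => 0

/-- A third-order cubic hypermatrix admits a third-order spectral decomposition if it
can be written as
`Prod(Prod(U, D_μ, D_μ^⊤), Prod(V, D_ν, D_ν^⊤)^{⊤²}, Prod(W, D_ω, D_ω^⊤)^⊤)`
where `Prod(U, V^{⊤²}, W^⊤) = Δ` and `μ, ν, ω` are symmetric. -/
noncomputable def Admits3SpectralDecomp {I : Type*} [Fintype I] [DecidableEq I]
    (A : I → I → I → ℂ) : Prop :=
  ∃ (U V W : I → I → I → ℂ) (μ ν ω : I → I → ℂ),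
    (∀ j k, μ j k = μ k j) ∧ (∀ j k, ν j k = ν k j) ∧ (∀ j k, ω j k = ω k j) ∧
    prod3 U (tr3 (tr3 V)) (tr3 W) = delta3 ∧
    A = prod3 (prod3 U (diag3 μ) (tr3 (diag3 μ)))
          (tr3 (tr3 (prod3 V (diag3 ν) (tr3 (diag3 ν)))))
          (tr3 (prod3 W (diag3 ω) (tr3 (diag3 ω))))

section Helpers

set_option linter.unusedSectionVars false
variable {I J : Type*} [Fintype I] [DecidableEq I] [Fintype J] [DecidableEq J]

lemma tr3_kron (A : I → I → I → ℂ) (B : J → J → J → ℂ) :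
    tr3 (kron3 A B) = kron3 (tr3 A) (tr3 B) := rfl

lemma prod3_kron (A C E : I → I → I → ℂ) (B D F : J → J → J → ℂ) :
    prod3 (kron3 A B) (kron3 C D) (kron3 E F) = kron3 (prod3 A C E) (prod3 B D F) := by
  funext i j k
  simp only [prod3, kron3, Fintype.sum_prod_type]
  rw [Finset.sum_mul_sum]
  exact Finset.sum_congr rfl fun t1 _ => Finset.sum_congr rfl fun t2 _ => by ring

lemma diag3_kron (μ : I → I → ℂ) (ν : J → J → ℂ) :
    diag3 (fun p q => μ p.1 q.1 * ν p.2 q.2) = kron3 (diag3 μ) (diag3 ν) := by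
  funext i j k
  simp only [diag3, kron3, Prod.ext_iff]
  by_cases h1 : i.1 = k.1 <;> by_cases h2 : i.2 = k.2 <;> simp [h1, h2]

lemma delta3_kron : (delta3 : (I × J) → _ → _ → ℂ) = kron3 delta3 delta3 := by
  funext i j k
  simp only [delta3, kron3, Prod.ext_iff]
  by_cases h1 : i.1 = j.1 <;> by_cases h2 : i.2 = j.2 <;>
    by_cases h3 : j.1 = k.1 <;> by_cases h4 : j.2 = k.2 <;>
    simp_all

/-- Direct sum of bilinear coefficient tables. -/
def sum2 (μ : I → I → ℂ) (ν : J → J → ℂ) : (I ⊕ J) → (I ⊕ J) → ℂ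
  | .inl a, .inl b => μ a b
  | .inr a, .inr b => ν a b
  | _, _ => 0

lemma sum2_symm (μ : I → I → ℂ) (ν : J → J → ℂ)
    (hμ : ∀ j k, μ j k = μ k j) (hν : ∀ j k, ν j k = ν k j) :
    ∀ j k, sum2 μ ν j k = sum2 μ ν k j := by
  intro j k
  cases j <;> cases k <;> simp [sum2, hμ, hν]

lemma tr3_dsum (A : I → I → I → ℂ) (B : J → J → J → ℂ) :
    tr3 (dsum3 A B) = dsum3 (tr3 A) (tr3 B) := by
  funext i j k
  cases i <;> cases j <;> cases k <;> rfl

lemma diag3_dsum (μ : I → I → ℂ) (ν : J → J → ℂ) :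
    diag3 (sum2 μ ν) = dsum3 (diag3 μ) (diag3 ν) := by
  funext i j k
  cases i <;> cases j <;> cases k <;> simp [diag3, dsum3, sum2]

lemma delta3_dsum : (delta3 : (I ⊕ J) → _ → _ → ℂ) = dsum3 delta3 delta3 := by
  funext i j k
  cases i <;> cases j <;> cases k <;> simp [delta3, dsum3]

lemma prod3_dsum (A C E : I → I → I → ℂ) (B D F : J → J → J → ℂ) :
    prod3 (dsum3 A B) (dsum3 C D) (dsum3 E F) = dsum3 (prod3 A C E) (prod3 B D F) := by
  funext i j k
  simp only [prod3, Fintype.sum_sum_type]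
  cases i <;> cases j <;> cases k <;> simp [dsum3, prod3]

end Helpers

/-- Inductive step of Theorem 7: third-order spectral decompositions are preserved by
Kronecker products and direct sums. -/
theorem admits3SpectralDecomp_kron_and_directSum
    {I J : Type*} [Fintype I] [DecidableEq I] [Fintype J] [DecidableEq J]
    (A : I → I → I → ℂ) (B : J → J → J → ℂ)
    (hA : Admits3SpectralDecomp A) (hB : Admits3SpectralDecomp B) :
    Admits3SpectralDecomp (kron3 A B) ∧ Admits3SpectralDecomp (dsum3 A B) := by
  obtain ⟨U, V, W, μ, ν, ω, hμ, hν, hω, hinv, hdec⟩ := hA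
  obtain ⟨U', V', W', μ', ν', ω', hμ', hν', hω', hinv', hdec'⟩ := hB
  constructor
  · refine ⟨kron3 U U', kron3 V V', kron3 W W',
      (fun p q => μ p.1 q.1 * μ' p.2 q.2),
      (fun p q => ν p.1 q.1 * ν' p.2 q.2),
      (fun p q => ω p.1 q.1 * ω' p.2 q.2),
      fun j k => by simp [hμ j.1 k.1, hμ' j.2 k.2],
      fun j k => by simp [hν j.1 k.1, hν' j.2 k.2],
      fun j k => by simp [hω j.1 k.1, hω' j.2 k.2], ?_, ?_⟩
    · rw [tr3_kron, tr3_kron, tr3_kron, prod3_kron, hinv, hinv', delta3_kron]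
    · rw [diag3_kron, diag3_kron, diag3_kron, tr3_kron, tr3_kron, tr3_kron,
        prod3_kron, prod3_kron, prod3_kron, tr3_kron, tr3_kron, tr3_kron,
        prod3_kron, ← hdec, ← hdec']
  · refine ⟨dsum3 U U', dsum3 V V', dsum3 W W',
      sum2 μ μ', sum2 ν ν', sum2 ω ω',
      sum2_symm μ μ' hμ hμ', sum2_symm ν ν' hν hν', sum2_symm ω ω' hω hω', ?_, ?_⟩
    · rw [tr3_dsum, tr3_dsum, tr3_dsum, prod3_dsum, hinv, hinv', delta3_dsum]
    · rw [diag3_dsum, diag3_dsum, diag3_dsum, tr3_dsum, tr3_dsum, tr3_dsum,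
        prod3_dsum, prod3_dsum, prod3_dsum, tr3_dsum, tr3_dsum, tr3_dsum,
        prod3_dsum, ← hdec, ← hdec']
end

section
/- Theorem 8 (general matrix Rayleigh quotient): Let n ≥ 1 and let A, U, V : Matrix (Fin n) (Fin n) ℂ and λ : Fin n → ℝ satisfy λ k ≥ 0 for all k, A = U · diagonal (fun k => (λ k : ℂ)) · Vᵀ, and U · Vᵀ = 1. For k : Fin n let P_k be the matrix with entries (P_k) i j = U i k · V j k. Let x, y : Fin n → ℂ be vectors such that for every k the bilinear form xᵀ · P_k · y = ∑_{i,j} x i · U i k · V j k · y j is a nonnegative real number, and such that xᵀ · y = ∑_i x i · y i ≠ 0. Then the Rayleigh quotient (xᵀ · A · y)/(xᵀ · y) is a real number r satisfying min_{0 ≤ t < n} λ t ≤ r ≤ max_{0 ≤ t < n} λ t. -/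
open Matrix

/-- Theorem 8 (general matrix Rayleigh quotient): for `A = U · diagonal λ · Vᵀ` with
`U · Vᵀ = 1` and nonnegative `λ`, and vectors `x, y` making every form
`xᵀ · P_k · y` a nonnegative real with `xᵀ · y ≠ 0`, the Rayleigh quotient
`(xᵀ · A · y)/(xᵀ · y)` is a real number between `min λ` and `max λ`. -/
theorem matrix_rayleigh_quotient {n : ℕ} (hn : 1 ≤ n)
    (A U V : Matrix (Fin n) (Fin n) ℂ) (lam : Fin n → ℝ)
    (hlam : ∀ k, 0 ≤ lam k)
    (hA : A = U * Matrix.diagonal (fun k => (lam k : ℂ)) * Vᵀ)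
    (hUV : U * Vᵀ = 1)
    (x y : Fin n → ℂ)
    (hP : ∀ k : Fin n, ∃ c : ℝ, 0 ≤ c ∧
      (∑ i : Fin n, ∑ j : Fin n, x i * (U i k * V j k) * y j) = (c : ℂ))
    (hxy : (∑ i : Fin n, x i * y i) ≠ 0) :
    ∃ r : ℝ,
      (∑ i : Fin n, ∑ j : Fin n, x i * A i j * y j) / (∑ i : Fin n, x i * y i) = (r : ℂ) ∧
      (⨅ t : Fin n, lam t) ≤ r ∧ r ≤ (⨆ t : Fin n, lam t) := by
  haveI : Nonempty (Fin n) := ⟨⟨0, hn⟩⟩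
  choose c hc0 hc using hP
  -- denominator
  have key1 : (∑ i, x i * y i) = ((∑ k, c k : ℝ) : ℂ) := by
    have h1 : (∑ i, ∑ j, x i * (U * Vᵀ) i j * y j) = ∑ i, x i * y i := by
      rw [hUV]
      simp [Matrix.one_apply, mul_ite, ite_mul]
    have h2 : (∑ i, ∑ j, x i * (U * Vᵀ) i j * y j) = ∑ k, ((c k : ℝ) : ℂ) := by
      have : ∀ i j : Fin n, x i * (U * Vᵀ) i j * y j
          = ∑ k, x i * (U i k * V j k) * y j := by
        intro i j
        simp [Matrix.mul_apply, Matrix.transpose_apply, Finset.mul_sum,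
          Finset.sum_mul, mul_assoc]
      simp only [this]
      calc (∑ i, ∑ j, ∑ k, x i * (U i k * V j k) * y j)
          = ∑ i, ∑ k, ∑ j, x i * (U i k * V j k) * y j :=
            Finset.sum_congr rfl fun i _ => Finset.sum_comm
        _ = ∑ k, ∑ i, ∑ j, x i * (U i k * V j k) * y j := Finset.sum_comm
        _ = ∑ k, ((c k : ℝ) : ℂ) := Finset.sum_congr rfl fun k _ => hc k
    push_cast
    rw [← h1, h2]
  -- numerator
  have key2 : (∑ i, ∑ j, x i * A i j * y j) = ((∑ k, lam k * c k : ℝ) : ℂ) := by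
    have hAentry : ∀ i j : Fin n, A i j = ∑ k, U i k * (lam k : ℂ) * V j k := by
      intro i j
      rw [hA, Matrix.mul_apply]
      simp [Matrix.mul_diagonal, Matrix.transpose_apply]
    have hAij : ∀ i j : Fin n, x i * A i j * y j
        = ∑ k, (lam k : ℂ) * (x i * (U i k * V j k) * y j) := by
      intro i j
      rw [hAentry]
      simp only [Finset.mul_sum, Finset.sum_mul]
      exact Finset.sum_congr rfl fun k _ => by ring
    simp only [hAij]
    calc (∑ i, ∑ j, ∑ k, (lam k : ℂ) * (x i * (U i k * V j k) * y j))
        = ∑ i, ∑ k, ∑ j, (lam k : ℂ) * (x i * (U i k * V j k) * y j) :=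
          Finset.sum_congr rfl fun i _ => Finset.sum_comm
      _ = ∑ k, ∑ i, ∑ j, (lam k : ℂ) * (x i * (U i k * V j k) * y j) := Finset.sum_comm
      _ = ((∑ k, lam k * c k : ℝ) : ℂ) := by
          push_cast
          refine Finset.sum_congr rfl fun k _ => ?_
          rw [Finset.sum_congr rfl fun i _ => (Finset.mul_sum _ _ _).symm]
          rw [← Finset.mul_sum, hc k]
  set S := ∑ k, c k with hS
  have hS0 : 0 ≤ S := Finset.sum_nonneg fun k _ => hc0 k
  have hSne : S ≠ 0 := by
    intro h
    apply hxy
    rw [key1, h]; simp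
  have hSpos : 0 < S := lt_of_le_of_ne hS0 (Ne.symm hSne)
  set T := ∑ k, lam k * c k with hT
  refine ⟨T / S, ?_, ?_, ?_⟩
  · rw [key1, key2]
    push_cast
    ring
  · rw [le_div_iff₀ hSpos]
    calc (⨅ t, lam t) * S = ∑ k, (⨅ t, lam t) * c k := by rw [Finset.mul_sum]
      _ ≤ T := Finset.sum_le_sum fun k _ =>
          mul_le_mul_of_nonneg_right (ciInf_le (Finite.bddBelow_range _) k) (hc0 k)
  · rw [div_le_iff₀ hSpos]
    calc T ≤ ∑ k, (⨆ t, lam t) * c k := Finset.sum_le_sum fun k _ =>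
          mul_le_mul_of_nonneg_right (le_ciSup (Finite.bddAbove_range _) k) (hc0 k)
      _ = (⨆ t, lam t) * S := by rw [Finset.mul_sum]
end
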